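/- In the group G = ⟨a, b⟩ the relation (ab)^16 = id holds. -/

import Mathlib

/-!
Setup: the automorphism group `Aut(T₈)` of the rooted 8-regular tree, realized
as the group of *portraits*: an automorphism is determined by the permutation
of `{1,…,8}` (here `Fin 8`) that it induces below each vertex (a finite word
over the alphabet).  Composition is written left-to-right: `p * q` acts by
first applying `p`, then `q` (this is the convention of the paper, where a
word `a b a b⁻¹ a` acts by applying `a` first).
-/

namespace T8

/-- The root permutation of the generator `a` : `(34)(67)(58)` on letters
`1,…,8`, written `0`-indexed on `Fin 8` as `(2 3)(5 6)(4 7)`. -/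
def σa : Equiv.Perm (Fin 8) := Equiv.swap 2 3 * Equiv.swap 5 6 * Equiv.swap 4 7

/-- The root permutation of the generator `b` : `(123)(456)` on letters
`1,…,8`, written `0`-indexed on `Fin 8` as `(0 1 2)(3 4 5)`. -/
def σb : Equiv.Perm (Fin 8) :=
  (Equiv.swap 0 1 * Equiv.swap 1 2) * (Equiv.swap 3 4 * Equiv.swap 4 5)

/-- An automorphism of the rooted `8`-regular tree, given by its portrait:
for each vertex `v` (a finite word over the `8`-letter alphabet), the
permutation induced on the letters just below `v`. -/
@[ext] structure Aut where
  val : List (Fin 8) → Equiv.Perm (Fin 8)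

/-- The section (state) of a tree automorphism at a first-level vertex `i`. -/
def sect (p : Aut) (i : Fin 8) : Aut := ⟨fun v => p.val (i :: v)⟩

/-- The section of a tree automorphism at an arbitrary vertex (word) `v`. -/
def sectWord (p : Aut) : List (Fin 8) → Aut
  | [] => p
  | i :: t => sectWord (sect p i) t

/-- The action of a tree automorphism on vertices:
`p (i·w) = (σ_p i) · (p_i w)` where `σ_p = p.val []` is the root permutation
and `p_i` is the section at `i`.  This is length- and prefix-preserving. -/
def act : Aut → List (Fin 8) → List (Fin 8)
  | _, [] => []
  | p, i :: t => p.val [] i :: act (sect p i) t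

/-- The action of the inverse of a tree automorphism on vertices. -/
def actInv : Aut → List (Fin 8) → List (Fin 8)
  | _, [] => []
  | p, i :: t => (p.val [])⁻¹ i :: actInv (sect p ((p.val [])⁻¹ i)) t

instance : One Aut := ⟨⟨fun _ => 1⟩⟩
instance : Mul Aut := ⟨fun p q => ⟨fun v => q.val (act p v) * p.val v⟩⟩
instance : Inv Aut := ⟨fun p => ⟨fun v => (p.val (actInv p v))⁻¹⟩⟩

@[simp] lemma one_val (v : List (Fin 8)) : (1 : Aut).val v = 1 := rfl
@[simp] lemma mul_val (p q : Aut) (v : List (Fin 8)) :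
    (p * q).val v = q.val (act p v) * p.val v := rfl
@[simp] lemma inv_val (p : Aut) (v : List (Fin 8)) :
    (p⁻¹).val v = (p.val (actInv p v))⁻¹ := rfl

@[simp] lemma sect_one (i : Fin 8) : sect 1 i = 1 := rfl

lemma sect_mul (p q : Aut) (i : Fin 8) :
    sect (p * q) i = sect p i * sect q (p.val [] i) := rfl

lemma sect_inv (p : Aut) (i : Fin 8) :
    sect p⁻¹ i = (sect p ((p.val [])⁻¹ i))⁻¹ := rfl

lemma act_one : ∀ v : List (Fin 8), act (1 : Aut) v = v
  | [] => rfl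
  | i :: t => by
    show (1 : Equiv.Perm (Fin 8)) i :: act (sect 1 i) t = i :: t
    rw [sect_one, act_one t, Equiv.Perm.one_apply]

lemma act_mul : ∀ (v : List (Fin 8)) (p q : Aut),
    act (p * q) v = act q (act p v)
  | [], _, _ => rfl
  | i :: t, p, q => by
    show (p * q).val [] i :: act (sect (p * q) i) t
        = act q (p.val [] i :: act (sect p i) t)
    rw [sect_mul, act_mul t]
    show (q.val (act p []) * p.val []) i :: _
        = q.val [] (p.val [] i) :: act (sect q (p.val [] i)) (act (sect p i) t)
    rfl

lemma act_inv : ∀ (v : List (Fin 8)) (p : Aut), act p⁻¹ v = actInv p v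
  | [], _ => rfl
  | i :: t, p => by
    show (p⁻¹).val [] i :: act (sect p⁻¹ i) t
        = (p.val [])⁻¹ i :: actInv (sect p ((p.val [])⁻¹ i)) t
    rw [sect_inv, act_inv t]
    rfl

lemma actInv_act : ∀ (v : List (Fin 8)) (p : Aut), actInv p (act p v) = v
  | [], _ => rfl
  | i :: t, p => by
    show (p.val [])⁻¹ (p.val [] i) ::
        actInv (sect p ((p.val [])⁻¹ (p.val [] i))) (act (sect p i) t) = i :: t
    rw [(Equiv.Perm.inv_eq_iff_eq (f := p.val []) (x := p.val [] i) (y := i)).mpr rfl,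
      actInv_act t]

lemma act_actInv : ∀ (v : List (Fin 8)) (p : Aut), act p (actInv p v) = v
  | [], _ => rfl
  | i :: t, p => by
    show p.val [] ((p.val [])⁻¹ i) ::
        act (sect p ((p.val [])⁻¹ i)) (actInv (sect p ((p.val [])⁻¹ i)) t) = i :: t
    rw [(Equiv.Perm.eq_inv_iff_eq (f := p.val []) (x := (p.val [])⁻¹ i) (y := i)).mp rfl,
      act_actInv t]

instance : Group Aut where
  mul_assoc p q r := by
    ext v i
    simp [mul_val, act_mul, mul_assoc]
  one_mul p := by
    ext v i
    simp [mul_val, act_one]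
  mul_one p := by
    ext v i
    simp [mul_val]
  inv_mul_cancel p := by
    ext v i
    simp [mul_val, inv_val, act_inv, actInv_act]

/-- The portrait of the generator `a = ⟨a, 1, 1, 1, 1, 1, 1, 1⟩ (34)(67)(58)`:
root permutation `σa`, section `a` at the first letter, trivial sections
elsewhere. -/
def aval : List (Fin 8) → Equiv.Perm (Fin 8)
  | [] => σa
  | i :: t => if i = 0 then aval t else 1

/-- The generator `a = ⟨a, 1, 1, 1, 1, 1, 1, 1⟩ (34)(67)(58)`. -/
def a : Aut := ⟨aval⟩

/-- The portraits of the generator `b` (for `tt`) and of `b⁻¹` (for `ff`):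
`b = ⟨1, 1, 1, 1, 1, 1, b, b⁻¹⟩ (123)(456)` and
`b⁻¹ = ⟨1, 1, 1, 1, 1, 1, b⁻¹, b⟩ (132)(465)`. -/
def bval : Bool → List (Fin 8) → Equiv.Perm (Fin 8)
  | s, [] => if s then σb else σb⁻¹
  | s, i :: t => if i = 6 then bval s t else if i = 7 then bval (!s) t else 1

/-- The generator `b = ⟨1, 1, 1, 1, 1, 1, b, b⁻¹⟩ (123)(456)`. -/
def b : Aut := ⟨bval true⟩

/-- Sanity: the first section of `a` is `a` itself. -/
lemma sect_a_zero : sect a 0 = a := rfl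

/-- Sanity: the section of `b` at the letter `7` (index `6`) is `b` itself. -/
lemma sect_b_six : sect b 6 = b := rfl

/-- The group `G = ⟨a, b⟩ = ⟨a, b, b⁻¹⟩ ≤ Aut(T₈)` of the paper. -/
def G : Subgroup Aut := Subgroup.closure {a, b}

lemma a_mem : a ∈ G := Subgroup.subset_closure (Set.mem_insert _ _)

lemma b_mem : b ∈ G := Subgroup.subset_closure (Set.mem_insert_of_mem _ rfl)

end T8

/-!
The root permutation of `ab` is the `8`-cycle `(1 2 3 5 8 6 7 4)`, and the only nontrivial
sections of `ab` are `a`, `b⁻¹`, `b` at the letters `1`, `5`, `6`. Hence `(ab)^8` acts trivially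
on the first level and its section at `1` is `a b⁻¹ b = a`. As `(ab)^8` commutes with `ab`, its
sections at consecutive letters of the cycle are conjugate, so all of them are conjugate to the
involution `a`, and `(ab)^16 = ((ab)^8)^2` is trivial.
-/

namespace T8

theorem Aut.ext_root_sect {p q : Aut} (hroot : p.val [] = q.val [])
    (hsect : ∀ i, sect p i = sect q i) : p = q := by
  ext1
  funext v
  cases v with
  | nil => exact hroot
  | cons i t => exact congrArg (fun r : Aut => r.val t) (hsect i)

theorem Aut.eq_one_of_mem_of_sect_mem {S : Set Aut}
    (hS : ∀ p ∈ S, p.val [] = 1 ∧ ∀ i, sect p i ∈ S) {p : Aut} (hp : p ∈ S) : p = 1 := by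
  have key : ∀ v, ∀ q ∈ S, q.val v = 1 := by
    intro v
    induction v with
    | nil => exact fun q hq => (hS q hq).1
    | cons i t ih => exact fun q hq => ih (sect q i) ((hS q hq).2 i)
  exact Aut.ext (funext fun v => key v p hp)

theorem root_mul (p q : Aut) : (p * q).val [] = q.val [] * p.val [] := rfl

theorem root_pow (p : Aut) (n : ℕ) : (p ^ n).val [] = p.val [] ^ n := by
  induction n with
  | zero => rfl
  | succ n ih => rw [pow_succ, root_mul, ih, pow_succ']

theorem sect_pow_succ (p : Aut) (n : ℕ) (i : Fin 8) :
    sect (p ^ (n + 1)) i = sect p i * sect (p ^ n) (p.val [] i) := by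
  rw [pow_succ', sect_mul]

theorem sq_eq_one_of_root_eq_one {p : Aut} (hroot : p.val [] = 1)
    (hsect : ∀ i, sect p i ^ 2 = 1) : p ^ 2 = 1 :=
  Aut.ext_root_sect (by rw [root_pow, hroot, one_pow]; rfl) fun i => by
    rw [sq, sect_mul, hroot, Equiv.Perm.one_apply, ← sq, hsect, sect_one]

theorem sect_pow_eq_conj {p : Aut} {n : ℕ} (hn : p.val [] ^ n = 1) (i : Fin 8) :
    sect (p ^ n) i = sect p i * sect (p ^ n) (p.val [] i) * (sect p i)⁻¹ := by
  have h := congrArg (sect · i) (Commute.self_pow p n).eq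
  simp only [sect_mul, root_pow, hn, Equiv.Perm.one_apply] at h
  exact eq_mul_inv_of_mul_eq h.symm

theorem isConj_sect_pow_of_sameCycle {p : Aut} {n : ℕ} (hn : p.val [] ^ n = 1) {i j : Fin 8}
    (hij : (p.val []).SameCycle i j) : IsConj (sect (p ^ n) i) (sect (p ^ n) j) := by
  obtain ⟨k, rfl⟩ := hij.exists_nat_pow_eq
  clear hij
  induction k with
  | zero => exact IsConj.refl _
  | succ k ih =>
    rw [pow_succ', Equiv.Perm.mul_apply]
    exact ih.trans (isConj_iff.2 ⟨_, (sect_pow_eq_conj hn _).symm⟩).symm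

theorem a_mul_self : a * a = 1 := by
  refine Aut.eq_one_of_mem_of_sect_mem (S := {a * a, 1}) ?_ (Set.mem_insert _ _)
  rintro p (rfl | rfl)
  · refine ⟨by decide, fun i => ?_⟩
    fin_cases i
    · exact Set.mem_insert _ _
    all_goals exact Set.mem_insert_of_mem _ rfl
  · exact ⟨rfl, fun _ => Set.mem_insert_of_mem _ rfl⟩

theorem sect_b_seven : sect b 7 = b⁻¹ := by
  refine eq_inv_of_mul_eq_one_right (Aut.eq_one_of_mem_of_sect_mem
    (S := {1, b * sect b 7, sect b 7 * b}) ?_ (Or.inr (Or.inl rfl)))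
  rintro p (rfl | rfl | rfl)
  · exact ⟨rfl, fun _ => Or.inl rfl⟩
  all_goals
    refine ⟨by decide, fun i => ?_⟩
    fin_cases i
    all_goals first | exact Or.inl rfl | exact Or.inr (Or.inl rfl) | exact Or.inr (Or.inr rfl)

theorem root_a_mul_b_apply (i : Fin 8) :
    (a * b).val [] i = ![1, 2, 4, 0, 7, 6, 3, 5] i := by
  revert i; decide

theorem sect_a_mul_b (i : Fin 8) : sect (a * b) i = ![a, 1, 1, 1, b⁻¹, b, 1, 1] i := by
  fin_cases i
  all_goals try rfl
  · exact (one_mul _).trans sect_b_seven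
  · exact one_mul b

theorem sect_a_mul_b_pow_eight_zero : sect ((a * b) ^ 8) 0 = a := by
  simp only [sect_pow_succ, root_a_mul_b_apply, sect_a_mul_b, Matrix.cons_val]
  simp

set_option maxRecDepth 10000 in
theorem root_a_mul_b_pow_eight : (a * b).val [] ^ 8 = 1 := by decide

set_option maxRecDepth 10000 in
theorem sameCycle_root_a_mul_b (i : Fin 8) : ((a * b).val []).SameCycle 0 i := by
  revert i; decide

theorem isConj_sect_a_mul_b_pow_eight (i : Fin 8) : IsConj a (sect ((a * b) ^ 8) i) := by
  have h := isConj_sect_pow_of_sameCycle root_a_mul_b_pow_eight (sameCycle_root_a_mul_b i)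
  rwa [sect_a_mul_b_pow_eight_zero] at h

/-- the relation `(ab)^16 = id` holds in `G`. -/
theorem stmt_4 : (a * b) ^ 16 = 1 := by
  rw [show 16 = 8 * 2 from rfl, pow_mul]
  refine sq_eq_one_of_root_eq_one (by rw [root_pow, root_a_mul_b_pow_eight]) fun i => ?_
  have h := (isConj_sect_a_mul_b_pow_eight i).pow 2
  rw [sq a, a_mul_self] at h
  exact isConj_one_right.1 h

end T8
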